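/- Let S be a rotationally asymmetric finite set of n ≥ 2 distinct points on a circle with true leader L, and suppose L's leading angle λ(L) is strictly smaller than the leading angle of every other point of S. Then for any point p ∈ S with α(L, p) < π (p strictly on the 'right' of L within angular distance less than π), p can see both L and L's first clockwise neighbor under the π-visibility model, hence p observes an angle strictly smaller than its own leading angle, and therefore p is not the true leader of any configuration consistent with p's view. -/

import Mathlib

open Real
open scoped Classical

noncomputable section

/-- Clockwise angular distance from `p` to `q`, a real number in `[0, 2π)`. -/
def cw (p q : Real.Angle) : ℝ :=
  if 0 ≤ (q - p).toReal then (q - p).toReal else (q - p).toReal + 2 * π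

/-- The sorted list of clockwise distances from `p` to the points of `S`. -/
def dists (S : Finset Real.Angle) (p : Real.Angle) : List ℝ :=
  (S.image (cw p)).sort (· ≤ ·)

/-- The clockwise angular-gap sequence of `p` with respect to the configuration `S`:
the sequence of clockwise gaps between consecutive points, starting from `p`. -/
def gapSeq (S : Finset Real.Angle) (p : Real.Angle) : List ℝ :=
  List.zipWith (fun a b => a - b) ((dists S p).tail ++ [2 * π]) (dists S p)

/-- Lexicographic strict order on lists of reals. -/
def lexLt (a b : List ℝ) : Prop := List.Lex (· < ·) a b

/-- `L` is the true leader of `S`: its angular-gap sequence is lexicographically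
strictly smallest. -/
def TrueLeader (S : Finset Real.Angle) (L : Real.Angle) : Prop :=
  L ∈ S ∧ ∀ r ∈ S, r ≠ L → lexLt (gapSeq S L) (gapSeq S r)

/-- `S` is rotationally asymmetric: no nontrivial rotation about the center fixes `S`. -/
def RotAsym (S : Finset Real.Angle) : Prop :=
  ∀ θ : Real.Angle, θ ≠ 0 → S.image (· + θ) ≠ S

/-- The antipodal position of a point on the circle. -/
def antipode (p : Real.Angle) : Real.Angle := p + (π : Real.Angle)

/-- The hypothetical configuration in which the antipode of `r` is unoccupied. -/
def C0 (S : Finset Real.Angle) (r : Real.Angle) : Finset Real.Angle := S.erase (antipode r)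

/-- The hypothetical configuration in which the antipode of `r` is occupied. -/
def C1 (S : Finset Real.Angle) (r : Real.Angle) : Finset Real.Angle := insert (antipode r) S

/-- `r` is an undecided leader: both hypothetical configurations are rotationally
asymmetric and `r` is the true leader of exactly one of them. -/
def Undecided (S : Finset Real.Angle) (r : Real.Angle) : Prop :=
  r ∈ S ∧ RotAsym (C0 S r) ∧ RotAsym (C1 S r) ∧
    Xor' (TrueLeader (C0 S r) r) (TrueLeader (C1 S r) r)

/-- `r` is a cognizant leader: `r` is the true leader in every consistent
(hypothetical) configuration. -/
def Cognizant (S : Finset Real.Angle) (r : Real.Angle) : Prop :=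
  r ∈ S ∧ (RotAsym (C0 S r) → TrueLeader (C0 S r) r) ∧
    (RotAsym (C1 S r) → TrueLeader (C1 S r) r)

/-- An expected leader is a cognizant leader or an undecided leader. -/
def ExpectedLeader (S : Finset Real.Angle) (r : Real.Angle) : Prop :=
  Cognizant S r ∨ Undecided S r

/-- The leading angle (clockwise gap to the first clockwise neighbor) of `p` in `S`. -/
def leadGap (S : Finset Real.Angle) (p : Real.Angle) : ℝ :=
  sInf {d : ℝ | ∃ q ∈ S, q ≠ p ∧ d = cw p q}

/-
Consistent configurations differ from `S` only at the antipode `a` of `p`. Since `α(L, p) < π`,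
the points `L`, `p` and `L`'s clockwise neighbour `x` all lie less than `π` clockwise of `L`,
whereas `a` lies at `α(L, p) + π`; so they survive in both configurations, and `L`'s leading
angle there is still at most `λ(L) = α(L, x)`. Every gap from `p` exceeds `λ(L)`: gaps to points
of `S` are at least `λ(p) > λ(L)`, and the gap to `a` is `π > α(L, p) ≥ λ(L)`. Gap sequences
begin with the leading angle, so `L` beats `p` lexicographically.
-/

namespace Real.Angle

lemma coe_cw (p q : Angle) : (cw p q : Angle) = q - p := by
  unfold cw
  split_ifs <;> simp [coe_add, coe_two_pi, coe_toReal]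

lemma cw_nonneg (p q : Angle) : 0 ≤ cw p q := by
  unfold cw
  split_ifs with h
  · exact h
  · linarith [neg_pi_lt_toReal (q - p)]

lemma cw_lt_two_pi (p q : Angle) : cw p q < 2 * π := by
  unfold cw
  split_ifs with h
  · linarith [toReal_le_pi (q - p), pi_pos]
  · linarith

lemma cw_eq_of_coe_eq {p q : Angle} {x : ℝ} (h0 : 0 ≤ x) (h1 : x < 2 * π)
    (h : (x : Angle) = q - p) : cw p q = x := by
  obtain ⟨k, hk⟩ := angle_eq_iff_two_pi_dvd_sub.mp ((coe_cw p q).trans h.symm)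
  have hk1 : (k : ℝ) < 1 := by
    nlinarith [cw_nonneg p q, cw_lt_two_pi p q, pi_pos]
  have hk2 : (-1 : ℝ) < k := by
    nlinarith [cw_nonneg p q, cw_lt_two_pi p q, pi_pos]
  obtain rfl : k = 0 := by
    have : k < 1 := by exact_mod_cast hk1
    have : -1 < k := by exact_mod_cast hk2
    omega
  simpa [sub_eq_zero] using hk

lemma cw_self (p : Angle) : cw p p = 0 :=
  cw_eq_of_coe_eq le_rfl two_pi_pos (by simp)

lemma cw_injective (p : Angle) : Function.Injective (cw p) := fun a b h => by
  have h' := coe_cw p a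
  rwa [h, coe_cw, sub_left_inj, eq_comm] at h'

lemma cw_pos {p q : Angle} (h : q ≠ p) : 0 < cw p q :=
  (cw_nonneg p q).lt_of_ne fun h0 => h (cw_injective p (h0.symm.trans (cw_self p).symm))

lemma cw_antipode {L p : Angle} (h : cw L p < π) : cw L (antipode p) = cw L p + π := by
  refine cw_eq_of_coe_eq (by linarith [cw_nonneg L p, pi_pos]) (by linarith) ?_
  rw [coe_add, coe_cw, antipode]
  abel

lemma cw_antipode_self (p : Angle) : cw p (antipode p) = π := by
  have h := cw_antipode (L := p) (p := p) (by rw [cw_self]; exact pi_pos)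
  rwa [cw_self, zero_add] at h

lemma ne_antipode_of_cw_lt_pi {L p q : Angle} (hp : cw L p < π) (hq : cw L q < π) :
    q ≠ antipode p := by
  rintro rfl
  linarith [cw_antipode hp, cw_nonneg L p]

end Real.Angle

open Real.Angle

section LeadGap

variable {S : Finset Real.Angle} {p q : Real.Angle}

lemma leadGap_eq_min' (h : (S.erase p).Nonempty) :
    leadGap S p = ((S.erase p).image (cw p)).min' (h.image _) := by
  rw [leadGap, ← (h.image (cw p)).csInf_eq_min']
  congr 1
  ext d
  simp only [Set.mem_ofPred_eq, Finset.coe_image, Set.mem_image, Finset.mem_coe, Finset.mem_erase]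
  exact ⟨fun ⟨q, hq, hqp, hd⟩ => ⟨q, ⟨hqp, hq⟩, hd.symm⟩,
    fun ⟨q, ⟨hqp, hq⟩, hd⟩ => ⟨q, hq, hqp, hd.symm⟩⟩

lemma leadGap_le_cw (hq : q ∈ S) (hqp : q ≠ p) : leadGap S p ≤ cw p q := by
  have h : (S.erase p).Nonempty := ⟨q, Finset.mem_erase.mpr ⟨hqp, hq⟩⟩
  rw [leadGap_eq_min' h]
  exact Finset.min'_le _ _ (Finset.mem_image_of_mem _ (Finset.mem_erase.mpr ⟨hqp, hq⟩))

lemma exists_cw_eq_leadGap (h : (S.erase p).Nonempty) :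
    ∃ q ∈ S, q ≠ p ∧ cw p q = leadGap S p := by
  obtain ⟨q, hq, hqe⟩ := Finset.mem_image.mp (Finset.min'_mem _ (h.image (cw p)))
  obtain ⟨hqp, hqS⟩ := Finset.mem_erase.mp hq
  exact ⟨q, hqS, hqp, hqe.trans (leadGap_eq_min' h).symm⟩

lemma lt_leadGap {b : ℝ} (h : (S.erase p).Nonempty) (hb : ∀ q ∈ S, q ≠ p → b < cw p q) :
    b < leadGap S p := by
  obtain ⟨q, hq, hqp, hqe⟩ := exists_cw_eq_leadGap h
  exact hqe ▸ hb q hq hqp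

lemma dists_eq_cons (hp : p ∈ S) (h : (S.erase p).Nonempty) :
    ∃ t, dists S p = 0 :: leadGap S p :: t := by
  set T := (S.erase p).image (cw p)
  have hT : T.Nonempty := h.image _
  have himage : S.image (cw p) = insert 0 T := by
    rw [← Finset.insert_erase hp, Finset.image_insert, cw_self]
  have h0T : 0 ∉ T := by
    simp only [T, Finset.mem_image, Finset.mem_erase, not_exists, not_and]
    exact fun q hq => (cw_pos hq.1).ne'
  have hsortT : T.sort (· ≤ ·) = T.min' hT :: (T.erase (T.min' hT)).sort (· ≤ ·) := by
    conv_lhs => rw [← Finset.insert_erase (T.min'_mem hT)]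
    exact Finset.sort_insert _ (fun b hb => T.min'_le b (Finset.mem_of_mem_erase hb))
      (Finset.notMem_erase _ _)
  refine ⟨(T.erase (T.min' hT)).sort (· ≤ ·), ?_⟩
  rw [dists, himage, Finset.sort_insert _ (fun b hb => ?_) h0T, hsortT, leadGap_eq_min' h]
  obtain ⟨q, -, rfl⟩ := Finset.mem_image.mp hb
  exact cw_nonneg p q

lemma gapSeq_eq_cons (hp : p ∈ S) (h : (S.erase p).Nonempty) :
    ∃ t, gapSeq S p = leadGap S p :: t := by
  obtain ⟨t, ht⟩ := dists_eq_cons hp h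
  exact ⟨List.zipWith (· - ·) (t ++ [2 * π]) (leadGap S p :: t), by simp [gapSeq, ht]⟩

end LeadGap

lemma not_trueLeader_of_leadGap_lt {C : Finset Real.Angle} {p L : Real.Angle}
    (hp : p ∈ C) (hL : L ∈ C) (hpL : p ≠ L) (hlt : leadGap C L < leadGap C p) :
    ¬ TrueLeader C p := by
  rintro ⟨-, hlead⟩
  obtain ⟨tp, htp⟩ := gapSeq_eq_cons hp ⟨L, Finset.mem_erase.mpr ⟨hpL.symm, hL⟩⟩
  obtain ⟨tL, htL⟩ := gapSeq_eq_cons hL ⟨p, Finset.mem_erase.mpr ⟨hpL, hp⟩⟩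
  have hlex := hlead L hL hpL.symm
  rw [lexLt, htp, htL, List.cons_lex_cons_iff] at hlex
  rcases hlex with h | ⟨h, -⟩
  · exact (h.trans hlt).false
  · exact hlt.ne' h

lemma not_trueLeader_of_cw_lt {C : Finset Real.Angle} {L p x : Real.Angle}
    (hp : p ∈ C) (hL : L ∈ C) (hx : x ∈ C) (hpL : p ≠ L) (hxL : x ≠ L)
    (hgap : ∀ q ∈ C, q ≠ p → cw L x < cw p q) : ¬ TrueLeader C p :=
  not_trueLeader_of_leadGap_lt hp hL hpL <|
    (leadGap_le_cw hx hxL).trans_lt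
      (lt_leadGap ⟨L, Finset.mem_erase.mpr ⟨hpL.symm, hL⟩⟩ hgap)

theorem stmt18_general (S : Finset Real.Angle)
    (L : Real.Angle) (hL : TrueLeader S L)
    (hstrict : ∀ r ∈ S, r ≠ L → leadGap S L < leadGap S r)
    (p : Real.Angle) (hp : p ∈ S) (hpL : p ≠ L) (hlt : cw L p < Real.pi) :
    (RotAsym (C0 S p) → ¬ TrueLeader (C0 S p) p) ∧
    (RotAsym (C1 S p) → ¬ TrueLeader (C1 S p) p) := by
  obtain ⟨x, hx, hxL, hLx⟩ := exists_cw_eq_leadGap ⟨p, Finset.mem_erase.mpr ⟨hpL, hp⟩⟩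
  have hLπ : cw L L < π := by rw [cw_self]; exact pi_pos
  have hxπ : cw L x < π := (hLx ▸ leadGap_le_cw hp hpL).trans_lt hlt
  have hgapS : ∀ q ∈ S, q ≠ p → cw L x < cw p q := fun q hq hqp =>
    hLx ▸ (hstrict p hp hpL).trans_le (leadGap_le_cw hq hqp)
  have hmemC0 : ∀ q ∈ S, cw L q < π → q ∈ C0 S p := fun q hq hqπ =>
    Finset.mem_erase.mpr ⟨ne_antipode_of_cw_lt_pi hlt hqπ, hq⟩
  refine ⟨fun _ => ?_, fun _ => ?_⟩
  · exact not_trueLeader_of_cw_lt (hmemC0 p hp hlt) (hmemC0 L hL.1 hLπ) (hmemC0 x hx hxπ)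
      hpL hxL fun q hq hqp => hgapS q (Finset.mem_of_mem_erase hq) hqp
  · refine not_trueLeader_of_cw_lt (Finset.mem_insert_of_mem hp) (Finset.mem_insert_of_mem hL.1)
      (Finset.mem_insert_of_mem hx) hpL hxL fun q hq hqp => ?_
    rcases Finset.mem_insert.mp hq with rfl | hqS
    · rwa [cw_antipode_self]
    · exact hgapS q hqS hqp

theorem stmt18 (S : Finset Real.Angle) (h2 : 2 ≤ S.card) (hasym : RotAsym S)
    (L : Real.Angle) (hL : TrueLeader S L)
    (hstrict : ∀ r ∈ S, r ≠ L → leadGap S L < leadGap S r)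
    (p : Real.Angle) (hp : p ∈ S) (hpL : p ≠ L) (hlt : cw L p < Real.pi) :
    (RotAsym (C0 S p) → ¬ TrueLeader (C0 S p) p) ∧
    (RotAsym (C1 S p) → ¬ TrueLeader (C1 S p) p) :=
  stmt18_general S L hL hstrict p hp hpL hlt
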